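/- Let π ∈ (0,1)^n with n ≥ 2 and define h(a,b) = ab + (1−a)(1−b). For the mean-field f_i(x) = ∑_r g_π(r) f̃_i(r,x), any zero x* ∈ (0,1)^n of f satisfies, for all distinct i, j ∈ [n]: |x*_i − x*_j| ≤ h(π_i, 1−π_j) ≤ x*_i + x*_j. -/

import Mathlib

/-!
Under `g_π` the answers are `R_k = Y ε_k` for a uniform label `Y = ±1` and independent flips
`ε_k = -1` of probability `π_k`; `channelWeight` is the law of `R_k` given `Y = 1`. Hence
`E[R_i R_j] = (1 - 2π_i)(1 - 2π_j)`, i.e. `P(R_i ≠ R_j) = h(π_i, 1 - π_j)`.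
With `T(r) = tanh(⟨r, ℓ_x⟩ / 2) ∈ (-1, 1)`, a zero `x` of `f` satisfies `E[T R_i] = 1 - 2 x_i`,
so `2 (x_i - x_j) = E[T (R_j - R_i)]` and `2 (1 - x_i - x_j) = E[T (R_i + R_j)]`. Since
`|R_j - R_i| = 1 - R_i R_j` and `|R_i + R_j| = 1 + R_i R_j`, both bounds follow from `|T| ≤ 1`.
-/

open Real Finset

/-- Sign of a Boolean: `true ↦ +1`, `false ↦ -1`. -/
def sg (b : Bool) : ℝ := if b then 1 else -1

/-- Output distribution (cosh form). -/
noncomputable def gc {n : ℕ} (x : Fin n → ℝ) (r : Fin n → ℝ) : ℝ :=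
  Real.cosh ((∑ j, r j * Real.log ((1 - x j) / x j)) / 2) *
    ∏ j, Real.sqrt (x j * (1 - x j))

/-- Update field coordinate (tanh form). -/
noncomputable def ft {n : ℕ} (r x : Fin n → ℝ) (i : Fin n) : ℝ :=
  (1/2) * (1 - Real.tanh ((∑ j, r j * Real.log ((1 - x j) / x j)) / 2) * r i) - x i

/-- KL divergence from `g_p` to `g_x` (sum over the hypercube `{±1}^n`). -/
noncomputable def V {n : ℕ} (p x : Fin n → ℝ) : ℝ :=
  ∑ r : Fin n → Bool, gc p (fun k => sg (r k)) *
    Real.log (gc p (fun k => sg (r k)) / gc x (fun k => sg (r k)))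

/-- Mean-field vector field `f_i(x) = E_{R ∼ g_p}[f̃_i(R,x)]`. -/
noncomputable def fvec {n : ℕ} (p x : Fin n → ℝ) (i : Fin n) : ℝ :=
  ∑ r : Fin n → Bool, gc p (fun k => sg (r k)) * ft (fun k => sg (r k)) x i

/-- `h(a,b) = ab + (1-a)(1-b)`. -/
def hh (a b : ℝ) : ℝ := a * b + (1 - a) * (1 - b)

def channelWeight (a : ℝ) (b : Bool) : ℝ := if b then 1 - a else a

lemma sg_not (b : Bool) : sg (!b) = -sg b := by
  cases b <;> simp [sg]

lemma exp_half_log_div_mul_sqrt {u v : ℝ} (hu : 0 < u) (hv : 0 < v) :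
    exp (log (u / v) / 2) * √(v * u) = u := by
  rw [div_eq_mul_one_div, ← rpow_def_of_pos (div_pos hu hv), ← sqrt_eq_rpow,
    ← sqrt_mul (div_pos hu hv).le, div_mul_eq_mul_div, mul_left_comm, mul_div_cancel_left₀ _ hv.ne',
    sqrt_mul_self hu.le]

lemma exp_sg_mul_half_log_mul_sqrt {a : ℝ} (ha : a ∈ Set.Ioo (0 : ℝ) 1) (b : Bool) :
    exp (sg b * log ((1 - a) / a) / 2) * √(a * (1 - a)) = channelWeight a b := by
  have h1a : 0 < 1 - a := sub_pos.2 ha.2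
  cases b
  · rw [sg, if_neg Bool.false_ne_true, neg_one_mul, ← log_inv, inv_div, mul_comm a]
    exact exp_half_log_div_mul_sqrt ha.1 h1a
  · rw [sg, if_pos rfl, one_mul]
    exact exp_half_log_div_mul_sqrt h1a ha.1

lemma gc_eq_mixture {n : ℕ} {p : Fin n → ℝ} (hp : ∀ k, p k ∈ Set.Ioo (0 : ℝ) 1)
    (r : Fin n → Bool) :
    gc p (fun k => sg (r k)) =
      ((∏ k, channelWeight (p k) (r k)) + ∏ k, channelWeight (p k) (!r k)) / 2 := by
  have hneg : -∑ k, sg (r k) * log ((1 - p k) / p k) / 2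
      = ∑ k, sg (!r k) * log ((1 - p k) / p k) / 2 := by
    simp only [← sum_neg_distrib, sg_not, neg_mul, neg_div]
  rw [gc, cosh_eq, sum_div, hneg, exp_sum, exp_sum, div_mul_eq_mul_div, add_mul,
    ← prod_mul_distrib, ← prod_mul_distrib]
  simp only [exp_sg_mul_half_log_mul_sqrt (hp _)]

lemma gc_nonneg {n : ℕ} (x r : Fin n → ℝ) : 0 ≤ gc x r :=
  mul_nonneg (cosh_pos _).le (prod_nonneg fun _ _ => sqrt_nonneg _)

lemma sum_prod_mul_prod_sg {ι : Type*} [Fintype ι] [DecidableEq ι] (w : ι → Bool → ℝ)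
    (hw : ∀ k, w k true + w k false = 1) (s : Finset ι) :
    ∑ r : ι → Bool, (∏ k, w k (r k)) * ∏ k ∈ s, sg (r k) = ∏ k ∈ s, (w k true - w k false) := by
  have hk : ∀ k, ∑ b, w k b * (if k ∈ s then sg b else 1)
      = if k ∈ s then w k true - w k false else 1 := by
    intro k
    split_ifs <;> simp [sg, hw k, sub_eq_add_neg]
  have hs : ∀ f : ι → ℝ, ∏ k ∈ s, f k = ∏ k, if k ∈ s then f k else 1 := fun f => by
    rw [prod_ite_mem, univ_inter]
  simp_rw [hs, ← prod_mul_distrib]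
  rw [← Fintype.prod_sum (fun k b => w k b * if k ∈ s then sg b else 1)]
  simp_rw [hk]

lemma sum_gc_mul_prod_sg {n : ℕ} {p : Fin n → ℝ} (hp : ∀ k, p k ∈ Set.Ioo (0 : ℝ) 1)
    (s : Finset (Fin n)) :
    ∑ r : Fin n → Bool, gc p (fun k => sg (r k)) * ∏ k ∈ s, sg (r k)
      = (∏ k ∈ s, (1 - 2 * p k) + ∏ k ∈ s, (2 * p k - 1)) / 2 := by
  have hw : ∀ k, channelWeight (p k) true + channelWeight (p k) false = 1 := fun k => by
    simp [channelWeight]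
  have hw' : ∀ k, channelWeight (p k) (!true) + channelWeight (p k) (!false) = 1 :=
    fun k => (add_comm _ _).trans (hw k)
  simp only [gc_eq_mixture hp, div_mul_eq_mul_div, ← sum_div, add_mul, sum_add_distrib]
  rw [sum_prod_mul_prod_sg (fun k b => channelWeight (p k) b) hw,
    sum_prod_mul_prod_sg (fun k b => channelWeight (p k) (!b)) hw']
  simp only [channelWeight, Bool.not_true, Bool.not_false, if_true, Bool.false_eq_true, if_false]
  ring_nf

lemma sum_gc_eq_one {n : ℕ} {p : Fin n → ℝ} (hp : ∀ k, p k ∈ Set.Ioo (0 : ℝ) 1) :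
    ∑ r : Fin n → Bool, gc p (fun k => sg (r k)) = 1 := by
  simpa using sum_gc_mul_prod_sg hp ∅

lemma sum_gc_mul_sg_mul_sg {n : ℕ} {p : Fin n → ℝ} (hp : ∀ k, p k ∈ Set.Ioo (0 : ℝ) 1)
    {i j : Fin n} (hij : i ≠ j) :
    ∑ r : Fin n → Bool, gc p (fun k => sg (r k)) * (sg (r i) * sg (r j))
      = (1 - 2 * p i) * (1 - 2 * p j) := by
  have h := sum_gc_mul_prod_sg hp {i, j}
  simp only [prod_pair hij] at h
  rw [h]
  ring

lemma fvec_eq_half_sub {n : ℕ} {p : Fin n → ℝ} (hp : ∀ k, p k ∈ Set.Ioo (0 : ℝ) 1)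
    (x : Fin n → ℝ) (i : Fin n) :
    fvec p x i = 1 / 2 - x i - (∑ r : Fin n → Bool, gc p (fun k => sg (r k)) *
      (tanh ((∑ k, sg (r k) * log ((1 - x k) / x k)) / 2) * sg (r i))) / 2 := by
  rw [fvec, eq_sub_iff_add_eq, sum_div, ← sum_add_distrib]
  calc _ = ∑ r : Fin n → Bool, gc p (fun k => sg (r k)) * (1 / 2 - x i) :=
        sum_congr rfl fun r _ => by rw [ft]; ring
    _ = 1 / 2 - x i := by rw [← sum_mul, sum_gc_eq_one hp, one_mul]

lemma abs_mul_sg_sub_sg_le {t : ℝ} (ht : |t| ≤ 1) (a b : Bool) :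
    |t * (sg a - sg b)| ≤ 1 - sg a * sg b := by
  rw [abs_le] at ht
  cases a <;> cases b <;> norm_num [sg, abs_le] <;> constructor <;> linarith

lemma mul_sg_add_sg_le {t : ℝ} (ht : |t| ≤ 1) (a b : Bool) :
    t * (sg a + sg b) ≤ 1 + sg a * sg b := by
  rw [abs_le] at ht
  cases a <;> cases b <;> norm_num [sg] <;> linarith

lemma abs_sub_le_and_le_add_of_sum_mul_sg {Ω : Type*} [Fintype Ω] {G T : Ω → ℝ}
    {a b : Ω → Bool} {c y z : ℝ} (hG : ∀ ω, 0 ≤ G ω) (hT : ∀ ω, |T ω| ≤ 1)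
    (hG1 : ∑ ω, G ω = 1) (hab : ∑ ω, G ω * (sg (a ω) * sg (b ω)) = c)
    (ha : ∑ ω, G ω * (T ω * sg (a ω)) = 1 - 2 * y)
    (hb : ∑ ω, G ω * (T ω * sg (b ω)) = 1 - 2 * z) :
    |y - z| ≤ (1 - c) / 2 ∧ (1 - c) / 2 ≤ y + z := by
  have hdis : ∑ ω, G ω * (1 - sg (a ω) * sg (b ω)) = 1 - c := by
    simp only [mul_sub, mul_one, sum_sub_distrib, hG1, hab]
  have hdiff : ∑ ω, G ω * (T ω * (sg (b ω) - sg (a ω))) = 2 * (y - z) := by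
    simp only [mul_sub, sum_sub_distrib, ha, hb]
    ring
  have hsum : ∑ ω, G ω * (T ω * (sg (a ω) + sg (b ω))) = 2 * (1 - y - z) := by
    simp only [mul_add, sum_add_distrib, ha, hb]
    ring
  constructor
  · have : 2 * |y - z| ≤ 1 - c := calc
      2 * |y - z| = |∑ ω, G ω * (T ω * (sg (b ω) - sg (a ω)))| := by
        rw [hdiff, abs_mul, abs_two]
      _ ≤ ∑ ω, |G ω * (T ω * (sg (b ω) - sg (a ω)))| := abs_sum_le_sum_abs _ _
      _ ≤ ∑ ω, G ω * (1 - sg (a ω) * sg (b ω)) := by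
        gcongr with ω
        rw [abs_mul, abs_of_nonneg (hG ω), mul_comm (sg (a ω))]
        exact mul_le_mul_of_nonneg_left (abs_mul_sg_sub_sg_le (hT ω) _ _) (hG ω)
      _ = 1 - c := hdis
    linarith
  · have : 2 * (1 - y - z) ≤ 1 + c := calc
      2 * (1 - y - z) = ∑ ω, G ω * (T ω * (sg (a ω) + sg (b ω))) := hsum.symm
      _ ≤ ∑ ω, G ω * (1 + sg (a ω) * sg (b ω)) := by
        gcongr with ω
        · exact hG ω
        · exact mul_sg_add_sg_le (hT ω) _ _
      _ = 1 + c := by simp only [mul_add, mul_one, sum_add_distrib, hG1, hab]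
    linarith

theorem stmt7_general (n : ℕ) (p : Fin n → ℝ) (hp : ∀ i, p i ∈ Set.Ioo (0:ℝ) 1)
    (x : Fin n → ℝ)
    (hzero : ∀ i, fvec p x i = 0) (i j : Fin n) (hij : i ≠ j) :
    |x i - x j| ≤ hh (p i) (1 - p j) ∧ hh (p i) (1 - p j) ≤ x i + x j := by
  have hmoment : ∀ l, ∑ r : Fin n → Bool, gc p (fun k => sg (r k)) *
      (tanh ((∑ k, sg (r k) * log ((1 - x k) / x k)) / 2) * sg (r l)) = 1 - 2 * x l :=
    fun l => by linarith [fvec_eq_half_sub hp x l, hzero l]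
  rw [show hh (p i) (1 - p j) = (1 - (1 - 2 * p i) * (1 - 2 * p j)) / 2 by unfold hh; ring]
  exact abs_sub_le_and_le_add_of_sum_mul_sg (fun r => gc_nonneg _ _)
    (fun r => (abs_tanh_lt_one _).le) (sum_gc_eq_one hp) (sum_gc_mul_sg_mul_sg hp hij)
    (hmoment i) (hmoment j)

theorem stmt7 (n : ℕ) (hn : 2 ≤ n) (p : Fin n → ℝ) (hp : ∀ i, p i ∈ Set.Ioo (0:ℝ) 1)
    (x : Fin n → ℝ) (hx : ∀ i, x i ∈ Set.Ioo (0:ℝ) 1)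
    (hzero : ∀ i, fvec p x i = 0) (i j : Fin n) (hij : i ≠ j) :
    |x i - x j| ≤ hh (p i) (1 - p j) ∧ hh (p i) (1 - p j) ≤ x i + x j :=
  stmt7_general n p hp x hzero i j hij
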